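/- Atomic swap fairness in the two-party HTLC model: if party A can redeem on chain 2 only by revealing the preimage x of the hashlock, and any revelation of x enables B to redeem on chain 1 before B's timelock expires, then in every complete execution either both parties obtain their agreed amounts or (after both timelocks expire without revelation) both recover their original deposits; no execution ends with exactly one party holding both amounts, assuming both parties follow the protocol's enabled moves and timelocks satisfy T_A > T_B > (time of any revelation). -/

import Mathlib

/-- State of the two-party HTLC atomic swap: deposits on the two chains,
whether the preimage has been revealed, redemptions, refunds, and a clock. -/
structure SwapState where
  deposited1 : Bool
  deposited2 : Bool
  revealed : Bool
  redeemed1 : Bool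
  redeemed2 : Bool
  refunded1 : Bool
  refunded2 : Bool
  clock : ℕ

/-- Transitions of the HTLC pair with timelocks `TA` (chain 1) and `TB`
(chain 2). A redeems on chain 2 by revealing the preimage before `TB`; B
redeems on chain 1 once the preimage is revealed, before `TA`; refunds are
enabled after the respective timelock when no redemption happened. Honesty of
B is reflected in the guard of `refund1`: B redeems whenever enabled before
`TA`, so chain 1 is refunded only if the preimage was never revealed. -/
inductive SwapStep (TA TB : ℕ) : SwapState → SwapState → Prop
  | tick (s : SwapState) :
      SwapStep TA TB s { s with clock := s.clock + 1 }
  | revealRedeem2 (s : SwapState)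
      (h : s.deposited2 = true ∧ s.clock < TB) :
      SwapStep TA TB s { s with revealed := true, redeemed2 := true }
  | redeem1 (s : SwapState)
      (h : s.revealed = true ∧ s.clock < TA) :
      SwapStep TA TB s { s with redeemed1 := true }
  | refund1 (s : SwapState)
      (h : TA ≤ s.clock ∧ s.redeemed1 = false ∧ s.revealed = false) :
      SwapStep TA TB s { s with refunded1 := true }
  | refund2 (s : SwapState)
      (h : TB ≤ s.clock ∧ s.redeemed2 = false) :
      SwapStep TA TB s { s with refunded2 := true }

/-! Both claims follow from an inductive invariant: the preimage is revealed exactly when A has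
redeemed on chain 2, B redeems only after the revelation, and a refund on chain `i` records that
its timelock `T_i` has passed without the corresponding redemption. Since refunds are only
possible after `TB`, the revelation, which needs a clock below `TB < TA`, can never follow
either refund. -/

structure SwapInvariant (TA TB : ℕ) (s : SwapState) : Prop where
  revealed_eq_redeemed2 : s.revealed = s.redeemed2
  revealed_of_redeemed1 : s.redeemed1 = true → s.revealed = true
  not_revealed_of_refunded1 : s.refunded1 = true → s.revealed = false
  timelock_le_of_refunded1 : s.refunded1 = true → TA ≤ s.clock
  not_redeemed2_of_refunded2 : s.refunded2 = true → s.redeemed2 = false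
  timelock_le_of_refunded2 : s.refunded2 = true → TB ≤ s.clock

namespace SwapInvariant

variable {TA TB : ℕ} {s t : SwapState}

theorem init :
    SwapInvariant TA TB ⟨true, true, false, false, false, false, false, 0⟩ := by
  constructor <;> simp

theorem step (hT : TB < TA) (hs : SwapInvariant TA TB s) (hst : SwapStep TA TB s t) :
    SwapInvariant TA TB t := by
  obtain ⟨hrev, hred1, hrf1, hT1, hrf2, hT2⟩ := hs
  cases hst with
  | tick =>
    exact ⟨hrev, hred1, hrf1, fun h => (hT1 h).trans s.clock.le_succ, hrf2,
      fun h => (hT2 h).trans s.clock.le_succ⟩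
  | revealRedeem2 h =>
    have hnot_refunded1 : s.refunded1 = false :=
      Bool.eq_false_iff.2 fun hf => (hT1 hf).not_gt (h.2.trans hT)
    have hnot_refunded2 : s.refunded2 = false :=
      Bool.eq_false_iff.2 fun hf => (hT2 hf).not_gt h.2
    constructor <;> simp [hnot_refunded1, hnot_refunded2]
  | redeem1 h =>
    exact ⟨hrev, fun _ => h.1, fun hf => absurd h.1 (by simp [hrf1 hf]), hT1, hrf2, hT2⟩
  | refund1 h => exact ⟨hrev, hred1, fun _ => h.2.2, fun _ => h.1, hrf2, hT2⟩
  | refund2 h => exact ⟨hrev, hred1, hrf1, hT1, fun _ => h.2, fun _ => h.1⟩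

theorem of_reflTransGen (hT : TB < TA)
    (hreach : Relation.ReflTransGen (SwapStep TA TB)
      ⟨true, true, false, false, false, false, false, 0⟩ s) :
    SwapInvariant TA TB s := by
  induction hreach with
  | refl => exact init
  | tail _ hst ih => exact ih.step hT hst

theorem not_redeemed2_and_refunded1 (hs : SwapInvariant TA TB s) :
    ¬(s.redeemed2 = true ∧ s.refunded1 = true) := fun ⟨h2, h1⟩ => by
  simpa [hs.revealed_eq_redeemed2, h2] using hs.not_revealed_of_refunded1 h1

theorem not_redeemed1_and_refunded2 (hs : SwapInvariant TA TB s) :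
    ¬(s.redeemed1 = true ∧ s.refunded2 = true) := fun ⟨h1, h2⟩ => by
  simpa [← hs.revealed_eq_redeemed2, hs.revealed_of_redeemed1 h1] using
    hs.not_redeemed2_of_refunded2 h2

end SwapInvariant

/-- Atomic swap fairness (safety): with `TB < TA`, in no reachable state does
one party hold both amounts — it is impossible that A redeemed on chain 2
while chain 1 was refunded, and impossible that B redeemed on chain 1 while
chain 2 was refunded. -/
theorem swap_fairness (TA TB : ℕ) (hT : TB < TA) (s : SwapState)
    (hreach : Relation.ReflTransGen (SwapStep TA TB)
      ⟨true, true, false, false, false, false, false, 0⟩ s) :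
    ¬(s.redeemed2 = true ∧ s.refunded1 = true) ∧
    ¬(s.redeemed1 = true ∧ s.refunded2 = true) :=
  have hs := SwapInvariant.of_reflTransGen hT hreach
  ⟨hs.not_redeemed2_and_refunded1, hs.not_redeemed1_and_refunded2⟩
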